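/- arXiv:1211.6329 — 7 statements merged into one kernel-verified Lean document; each statement's English description precedes it below -/
import Mathlib

section
/- For every (λ, μ, ν, σ) ∈ ℂ⁴, the set of singular points of F_{λ,μ,ν,σ} in ℂ⁴ is finite and has at most 3 elements. (Each fibre of the miniversal deformation family of the threefold cusp admits at most three singular points.) -/
open MvPolynomial

/-- The miniversal deformation `F_{λ,μ,ν,σ} = x² − y³ − z² + w³ + λ + μy − νw + σyw` of the
threefold cusp, with variables `x = X 0`, `y = X 1`, `z = X 2`, `w = X 3`. -/
noncomputable def Fdef (l m n s : ℂ) : MvPolynomial (Fin 4) ℂ :=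
  X 0 ^ 2 - X 1 ^ 3 - X 2 ^ 2 + X 3 ^ 3 + C l + C m * X 1 - C n * X 3 + C s * (X 1 * X 3)

/-- A singular point of `F_{λ,μ,ν,σ}`: a point of `ℂ⁴` at which `F_{λ,μ,ν,σ}` and all four
of its partial derivatives vanish. -/
def IsSingPt (l m n s : ℂ) (p : Fin 4 → ℂ) : Prop :=
  eval p (Fdef l m n s) = 0 ∧ ∀ i : Fin 4, eval p (pderiv i (Fdef l m n s)) = 0

lemma sing_eqs {l m n s : ℂ} {p : Fin 4 → ℂ} (h : IsSingPt l m n s p) :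
    p 0 = 0 ∧ p 2 = 0 ∧ 3 * (p 1) ^ 2 - s * (p 3) - m = 0 ∧
      3 * (p 3) ^ 2 + s * (p 1) - n = 0 ∧
      2 * (p 1) ^ 3 - 2 * (p 3) ^ 3 - s * (p 1) * (p 3) + l = 0 := by
  obtain ⟨h0, hd⟩ := h
  have h1 := hd 0
  have h2 := hd 1
  have h3 := hd 2
  have h4 := hd 3
  simp [Fdef, pderiv_X, Pi.single_apply] at h0 h1 h2 h3 h4
  refine ⟨h1, h3, by linear_combination -h2, by linear_combination h4, ?_⟩
  linear_combination h0 - p 0 * h1 + p 2 * h3 - p 1 * h2 - p 3 * h4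

lemma encard_roots_le (P : Polynomial ℂ) (hP : P ≠ 0) :
    {y : ℂ | Polynomial.eval y P = 0}.encard ≤ (P.natDegree : ℕ∞) := by
  classical
  have hset : {y : ℂ | Polynomial.eval y P = 0} = ↑P.roots.toFinset := by
    ext y
    simp [Polynomial.mem_roots, hP, Polynomial.IsRoot]
  rw [hset, Set.encard_coe_eq_coe_finsetCard]
  exact_mod_cast le_trans (Multiset.toFinset_card_le _) (Polynomial.card_roots' P)

lemma encard_le_of_inj (S : Set (Fin 4 → ℂ)) (f : (Fin 4 → ℂ) → ℂ) (P : Polynomial ℂ)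
    (hP : P ≠ 0) (hd : P.natDegree ≤ 3) (hinj : Set.InjOn f S)
    (hsub : ∀ p ∈ S, Polynomial.eval (f p) P = 0) : S.encard ≤ 3 := by
  calc S.encard = (f '' S).encard := (hinj.encard_image).symm
    _ ≤ {y : ℂ | Polynomial.eval y P = 0}.encard := by
        apply Set.encard_mono
        rintro y ⟨p, hp, rfl⟩
        exact hsub p hp
    _ ≤ (P.natDegree : ℕ∞) := encard_roots_le P hP
    _ ≤ 3 := by exact_mod_cast hd

/-- Each fibre of the miniversal deformation family of the threefold cusp admits at most
three singular points: for every `(λ,μ,ν,σ) ∈ ℂ⁴` the set of singular points of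
`F_{λ,μ,ν,σ}` is finite, with at most 3 elements. -/
theorem stmt_4 (l m n s : ℂ) :
    {p : Fin 4 → ℂ | IsSingPt l m n s p}.encard ≤ 3 := by
  classical
  by_cases hs : s = 0
  · subst hs
    by_cases hm : m = 0
    · subst hm
      -- y = 0, map to w, cubic -2w^3 + l = 0
      refine encard_le_of_inj _ (fun p => p 3)
        (Polynomial.C (-2) * Polynomial.X ^ 3 + Polynomial.C 0 * Polynomial.X ^ 2
          + Polynomial.C 0 * Polynomial.X + Polynomial.C l) ?_ ?_ ?_ ?_
      · intro h
        have := Polynomial.natDegree_cubic (a := (-2 : ℂ)) (b := 0) (c := 0) (d := l)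
          (by norm_num)
        rw [h] at this
        simp at this
      · exact le_of_eq (Polynomial.natDegree_cubic (by norm_num))
      · intro p hp q hq hpq
        obtain ⟨hp0, hp2, hp1, hp3, hpE⟩ := sing_eqs hp
        obtain ⟨hq0, hq2, hq1, hq3, hqE⟩ := sing_eqs hq
        have hy : p 1 = 0 := by
          have : (p 1) ^ 2 = 0 := by linear_combination hp1 / 3
          exact pow_eq_zero_iff (n := 2) (by norm_num) |>.mp this
        have hy' : q 1 = 0 := by
          have : (q 1) ^ 2 = 0 := by linear_combination hq1 / 3
          exact pow_eq_zero_iff (n := 2) (by norm_num) |>.mp this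
        funext i
        fin_cases i
        · exact hp0.trans hq0.symm
        · exact hy.trans hy'.symm
        · exact hp2.trans hq2.symm
        · exact hpq
      · intro p hp
        obtain ⟨hp0, hp2, hp1, hp3, hpE⟩ := sing_eqs hp
        have hy : p 1 = 0 := by
          have : (p 1) ^ 2 = 0 := by linear_combination hp1 / 3
          exact pow_eq_zero_iff (n := 2) (by norm_num) |>.mp this
        simp only [Polynomial.eval_add, Polynomial.eval_mul, Polynomial.eval_pow,
          Polynomial.eval_C, Polynomial.eval_X]
        linear_combination hpE - 2 * (p 1) ^ 2 * hy
    · -- s = 0, m ≠ 0 : map to w, quadratic 3w^2 - n = 0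
      refine encard_le_of_inj _ (fun p => p 3)
        (Polynomial.C 3 * Polynomial.X ^ 2 + Polynomial.C 0 * Polynomial.X
          + Polynomial.C (-n)) ?_ ?_ ?_ ?_
      · intro h
        have := Polynomial.natDegree_quadratic (a := (3 : ℂ)) (b := 0) (c := -n)
          (by norm_num)
        rw [h] at this
        simp at this
      · rw [Polynomial.natDegree_quadratic (by norm_num : (3:ℂ) ≠ 0)]; norm_num
      · intro p hp q hq hpq
        obtain ⟨hp0, hp2, hp1, hp3, hpE⟩ := sing_eqs hp
        obtain ⟨hq0, hq2, hq1, hq3, hqE⟩ := sing_eqs hq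
        -- 2*m*y = 2*n*w - 3*l
        have hyp : 2 * m * p 1 = 2 * n * p 3 - 3 * l := by
          linear_combination -2 * (p 1) * hp1 + 2 * (p 3) * hp3 + 3 * hpE
        have hyq : 2 * m * q 1 = 2 * n * q 3 - 3 * l := by
          linear_combination -2 * (q 1) * hq1 + 2 * (q 3) * hq3 + 3 * hqE
        have hy : p 1 = q 1 := by
          have h2m : (2 : ℂ) * m ≠ 0 := by
            simp [hm]
          have hpq' : p 3 = q 3 := hpq
          apply mul_left_cancel₀ h2m
          rw [hyp, hyq, hpq']
        funext i
        fin_cases i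
        · exact hp0.trans hq0.symm
        · exact hy
        · exact hp2.trans hq2.symm
        · exact hpq
      · intro p hp
        obtain ⟨hp0, hp2, hp1, hp3, hpE⟩ := sing_eqs hp
        simp only [Polynomial.eval_add, Polynomial.eval_mul, Polynomial.eval_pow,
          Polynomial.eval_C, Polynomial.eval_X]
        linear_combination hp3
  · -- s ≠ 0 : map to y, cubic 3s y^3 - 6n y^2 + ms y + (3ls + 2mn) = 0
    refine encard_le_of_inj _ (fun p => p 1)
      (Polynomial.C (3 * s) * Polynomial.X ^ 3 + Polynomial.C (-6 * n) * Polynomial.X ^ 2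
        + Polynomial.C (m * s) * Polynomial.X + Polynomial.C (3 * l * s + 2 * m * n))
      ?_ ?_ ?_ ?_
    · intro h
      have := Polynomial.natDegree_cubic (a := 3 * s) (b := -6 * n) (c := m * s)
        (d := 3 * l * s + 2 * m * n) (by simp [hs])
      rw [h] at this
      simp at this
    · exact le_of_eq (Polynomial.natDegree_cubic (by simp [hs]))
    · intro p hp q hq hpq
      obtain ⟨hp0, hp2, hp1, hp3, hpE⟩ := sing_eqs hp
      obtain ⟨hq0, hq2, hq1, hq3, hqE⟩ := sing_eqs hq
      have hw : p 3 = q 3 := by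
        apply mul_left_cancel₀ hs
        have e1 : s * p 3 = 3 * (p 1) ^ 2 - m := by linear_combination -hp1
        have e2 : s * q 3 = 3 * (q 1) ^ 2 - m := by linear_combination -hq1
        have hpq' : p 1 = q 1 := hpq
        rw [e1, e2, hpq']
      funext i
      fin_cases i
      · exact hp0.trans hq0.symm
      · exact hpq
      · exact hp2.trans hq2.symm
      · exact hw
    · intro p hp
      obtain ⟨hp0, hp2, hp1, hp3, hpE⟩ := sing_eqs hp
      set y := p 1
      set w := p 3
      have key : 9 * s ^ 2 * (3 * s * y ^ 3 - 6 * n * y ^ 2 + m * s * y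
          + (3 * l * s + 2 * m * n)) = 0 := by
        linear_combination (27 * s ^ 3) * hpE + ((54 * y ^ 2 - 18 * m) * s ^ 2) * hp3 +
          (-27 * (2 * ((s * w) ^ 2 + s * w * (3 * y ^ 2 - m) + (3 * y ^ 2 - m) ^ 2)
            + s ^ 3 * y) + 3 * (54 * y ^ 2 - 18 * m) * (s * w + 3 * y ^ 2 - m)) * hp1
      have h9 : (9 : ℂ) * s ^ 2 ≠ 0 := by
        simp [hs]
      have := (mul_eq_zero.mp key).resolve_left h9
      simp only [Polynomial.eval_add, Polynomial.eval_mul, Polynomial.eval_pow,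
        Polynomial.eval_C, Polynomial.eval_X]
      linear_combination this
end

section
/- For every (λ, μ, ν) ∈ ℂ³, the set of singular points of F_{λ,μ,ν,0} (the case σ = 0) has at most 2 elements; equivalently, the system of equations in (y,w) ∈ ℂ²: 3y² − μ = 0, 3w² − ν = 0, 2μy − 2νw + 3λ = 0 has at most 2 solutions. -/
open MvPolynomial

/-- The second set has at most two elements. -/
lemma aux_enc2 (l m n : ℂ) :
    {q : ℂ × ℂ |
        3 * q.1 ^ 2 - m = 0 ∧ 3 * q.2 ^ 2 - n = 0 ∧
        2 * m * q.1 - 2 * n * q.2 + 3 * l = 0}.encard ≤ 2 := by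
  obtain ⟨a, ha⟩ := IsAlgClosed.exists_pow_nat_eq (k := ℂ) (n / 3) zero_lt_two
  set g : ℂ → ℂ × ℂ := fun w => (if m = 0 then 0 else (2 * n * w - 3 * l) / (2 * m), w) with hg
  have hsub : {q : ℂ × ℂ |
        3 * q.1 ^ 2 - m = 0 ∧ 3 * q.2 ^ 2 - n = 0 ∧
        2 * m * q.1 - 2 * n * q.2 + 3 * l = 0} ⊆ {g a, g (-a)} := by
    rintro ⟨y, w⟩ ⟨h1, h2, h3⟩
    simp only [Set.mem_setOf_eq] at h1 h2 h3
    have hw : w = a ∨ w = -a := by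
      have : (w - a) * (w + a) = 0 := by ring_nf; linear_combination h2 / 3 - ha
      rcases mul_eq_zero.1 this with h | h
      · exact Or.inl (sub_eq_zero.1 h)
      · exact Or.inr (eq_neg_of_add_eq_zero_left h)
    have hy : y = if m = 0 then 0 else (2 * n * w - 3 * l) / (2 * m) := by
      by_cases hm : m = 0
      · subst hm
        simp only [if_pos]
        have hy2 : y ^ 2 = 0 := by linear_combination h1 / 3
        exact pow_eq_zero_iff (n := 2) (by norm_num) |>.1 hy2
      · rw [if_neg hm]
        field_simp
        linear_combination h3
    rcases hw with rfl | rfl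
    · left; simp [hg, hy]
    · right; simp [hg, hy]
  calc _ ≤ ({g a, g (-a)} : Set (ℂ × ℂ)).encard := Set.encard_le_encard hsub
    _ ≤ 2 := by
        refine (Set.encard_insert_le _ _).trans ?_
        rw [Set.encard_singleton, one_add_one_eq_two]

/-- For `σ = 0`, the set of singular points of `F_{λ,μ,ν,0}` has at most 2 elements;
equivalently, the system `3y² − μ = 0`, `3w² − ν = 0`, `2μy − 2νw + 3λ = 0` in `(y,w) ∈ ℂ²`
has at most 2 solutions. -/
theorem stmt_5 (l m n : ℂ) :
    {p : Fin 4 → ℂ | IsSingPt l m n 0 p}.encard ≤ 2 ∧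
    {q : ℂ × ℂ |
        3 * q.1 ^ 2 - m = 0 ∧ 3 * q.2 ^ 2 - n = 0 ∧
        2 * m * q.1 - 2 * n * q.2 + 3 * l = 0}.encard ≤ 2 := by
  refine ⟨?_, aux_enc2 l m n⟩
  set S2 := {q : ℂ × ℂ |
        3 * q.1 ^ 2 - m = 0 ∧ 3 * q.2 ^ 2 - n = 0 ∧
        2 * m * q.1 - 2 * n * q.2 + 3 * l = 0} with hS2
  set h : ℂ × ℂ → (Fin 4 → ℂ) := fun q => ![0, q.1, 0, q.2] with hh
  suffices hsub : {p : Fin 4 → ℂ | IsSingPt l m n 0 p} ⊆ h '' S2 by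
    exact (Set.encard_le_encard hsub).trans
      ((Set.encard_image_le _ _).trans (aux_enc2 l m n))
  · 
    intro p hp
    obtain ⟨hF, hd⟩ := hp
    have h0 := hd 0; have h1 := hd 1; have h2 := hd 2; have h3 := hd 3
    simp only [Fdef, map_add, map_sub, pderiv_X, pderiv_C] at h0 h1 h2 h3
    simp [Fdef, pderiv_X, pderiv_C] at h0 h1 h2 h3
    simp [Fdef] at hF
    refine ⟨(p 1, p 3), ⟨by linear_combination -h1, by linear_combination h3, ?_⟩, ?_⟩
    · -- 2 m p1 - 2 n p3 + 3 l = 0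
      have hm : m = 3 * p 1 ^ 2 := by linear_combination h1
      have hn : n = 3 * p 3 ^ 2 := by linear_combination -h3
      subst hm hn
      linear_combination 3 * hF - 3 * (p 0) * h0 + 3 * (p 2) * h2
    · funext i
      fin_cases i <;> simp [hh, h0, h2]
end

section
/- Let ε ∈ ℂ be a primitive cube root of unity and let σ ∈ ℂ with σ ≠ 0. Then (λ, μ, ν) ∈ ℂ³ satisfies the three equations 4ν² − μσ² = 0, σ⁴ − 36μν − 27λσ = 0, and 3μ²σ² − νσ⁴ − 36μν² − 54λνσ = 0 if and only if (λ, μ, ν) is one of the following four points: (σ³/27, 0, 0), (−5σ³/108, σ²/4, σ²/4), (−5σ³/108, ε²σ²/4, εσ²/4), (−5σ³/108, εσ²/4, ε²σ²/4). -/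
/-- For `ε` a primitive cube root of unity and `σ ≠ 0`, the solutions `(λ, μ, ν) ∈ ℂ³` of
the system `4ν² − μσ² = 0`, `σ⁴ − 36μν − 27λσ = 0`, `3μ²σ² − νσ⁴ − 36μν² − 54λνσ = 0`
are exactly the four points `(σ³/27, 0, 0)`, `(−5σ³/108, σ²/4, σ²/4)`,
`(−5σ³/108, ε²σ²/4, εσ²/4)` and `(−5σ³/108, εσ²/4, ε²σ²/4)`. -/
theorem stmt_10 (ε : ℂ) (hε : ε ≠ 1) (hε3 : ε ^ 3 = 1) (s : ℂ) (hs : s ≠ 0)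
    (l m n : ℂ) :
    (4 * n ^ 2 - m * s ^ 2 = 0 ∧
     s ^ 4 - 36 * m * n - 27 * l * s = 0 ∧
     3 * m ^ 2 * s ^ 2 - n * s ^ 4 - 36 * m * n ^ 2 - 54 * l * n * s = 0) ↔
    ((l, m, n) = (s ^ 3 / 27, 0, 0) ∨
     (l, m, n) = (-5 * s ^ 3 / 108, s ^ 2 / 4, s ^ 2 / 4) ∨
     (l, m, n) = (-5 * s ^ 3 / 108, ε ^ 2 * s ^ 2 / 4, ε * s ^ 2 / 4) ∨
     (l, m, n) = (-5 * s ^ 3 / 108, ε * s ^ 2 / 4, ε ^ 2 * s ^ 2 / 4)) := by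
  have hε1 : ε - 1 ≠ 0 := sub_ne_zero.mpr hε
  have hc : ε ^ 2 + ε + 1 = 0 := by
    have h : (ε - 1) * (ε ^ 2 + ε + 1) = 0 := by linear_combination hε3
    rcases mul_eq_zero.mp h with h' | h'
    · exact absurd h' hε1
    · exact h'
  have hs2 : s ^ 2 ≠ 0 := pow_ne_zero 2 hs
  constructor
  · rintro ⟨h1, h2, h3⟩
    have key : n * (64 * n ^ 3 - s ^ 6) = 0 := by
      linear_combination (s^2/3) * h3 + (20*n^2 - (4*n^2 - m*s^2)) * h1 - (2*n*s^2/3) * h2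
    rcases mul_eq_zero.mp key with hn | hn
    · subst hn
      have hm : m = 0 := by
        have h : m * s ^ 2 = 0 := by linear_combination -h1
        exact (mul_eq_zero.mp h).resolve_right hs2
      subst hm
      have hl : l = s ^ 3 / 27 := mul_right_cancel₀ hs (by linear_combination (-1/27) * h2)
      left
      rw [Prod.mk.injEq, Prod.mk.injEq]
      exact ⟨hl, rfl, rfl⟩
    · have hf : (4*n - s^2) * ((4*n - ε*s^2) * (4*n - ε^2*s^2)) = 0 := by
        linear_combination hn + (-16*n^2*s^2 + 4*n*s^4) * hc + (4*n*s^4 - s^6) * hε3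
      rcases mul_eq_zero.mp hf with h' | h'
      · have hnv : n = s^2/4 := by linear_combination h' / 4
        subst hnv
        have hm : m = s^2/4 := mul_right_cancel₀ hs2 (by linear_combination -h1)
        subst hm
        have hl : l = -5 * s^3/108 := mul_right_cancel₀ hs (by linear_combination (-1/27) * h2)
        right; left
        rw [Prod.mk.injEq, Prod.mk.injEq]
        exact ⟨hl, rfl, rfl⟩
      rcases mul_eq_zero.mp h' with h'' | h''
      · have hnv : n = ε * s^2/4 := by linear_combination h'' / 4
        subst hnv
        have hm : m = ε^2 * s^2/4 := mul_right_cancel₀ hs2 (by linear_combination -h1)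
        subst hm
        have hl : l = -5 * s^3/108 :=
          mul_right_cancel₀ hs (by linear_combination (-1/27) * h2 - (s^4/12) * hε3)
        right; right; left
        rw [Prod.mk.injEq, Prod.mk.injEq]
        exact ⟨hl, rfl, rfl⟩
      · have hnv : n = ε^2 * s^2/4 := by linear_combination h'' / 4
        subst hnv
        have hm : m = ε * s^2/4 := mul_right_cancel₀ hs2
          (by linear_combination -h1 + (ε*s^4/4) * hε3)
        subst hm
        have hl : l = -5 * s^3/108 :=
          mul_right_cancel₀ hs (by linear_combination (-1/27) * h2 - (s^4/12) * hε3)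
        right; right; right
        rw [Prod.mk.injEq, Prod.mk.injEq]
        exact ⟨hl, rfl, rfl⟩
  · intro h
    rcases h with h | h | h | h <;>
      (rw [Prod.mk.injEq, Prod.mk.injEq] at h; obtain ⟨hl, hm, hn⟩ := h; subst hl; subst hm; subst hn)
    · exact ⟨by ring, by ring, by ring⟩
    · exact ⟨by ring, by ring, by ring⟩
    · exact ⟨by ring, by linear_combination (-9*s^4/4) * hε3,
        by linear_combination (-3*ε*s^6/8) * hε3⟩
    · exact ⟨by linear_combination (ε*s^4/4) * hε3, by linear_combination (-9*s^4/4) * hε3,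
        by linear_combination (-9*ε^2*s^6/16) * hε3⟩
end

section
/- For every σ ∈ ℂ, the polynomial F(x,y,z,w) = x² − y³ − z² + w³ − 5σ³/108 + (σ²/4)·y − (σ²/4)·w + σ·y·w has exactly one singular point in ℂ⁴, namely (0, σ/6, 0, −σ/6). (This is the parameter value Λ₁; it gives a trivial deformation of the threefold cusp.) -/
open MvPolynomial

/-- At the parameter `Λ₁ = (−5σ³/108, σ²/4, σ²/4, σ)`, the polynomial
`x² − y³ − z² + w³ − 5σ³/108 + (σ²/4)y − (σ²/4)w + σyw` has exactly one singular point,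
namely `(0, σ/6, 0, −σ/6)`. -/
theorem stmt_11 (s : ℂ) :
    {p : Fin 4 → ℂ | IsSingPt (-5 * s ^ 3 / 108) (s ^ 2 / 4) (s ^ 2 / 4) s p} =
      {![0, s / 6, 0, -s / 6]} := by
  ext p
  simp only [Set.mem_setOf_eq, Set.mem_singleton_iff]
  constructor
  · rintro ⟨hF, hd⟩
    have h0 : (2 : ℂ) * p 0 = 0 := by have := hd 0; simpa [Fdef] using this
    have h2 : (-2 : ℂ) * p 2 = 0 := by have := hd 2; simpa [Fdef] using this
    have h1 : -3 * p 1 ^ 2 + s ^ 2 / 4 + s * p 3 = 0 := by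
      have := hd 1; simp [Fdef] at this; linear_combination this
    have h3 : 3 * p 3 ^ 2 - s ^ 2 / 4 + s * p 1 = 0 := by
      have := hd 3; simp [Fdef] at this; linear_combination this
    have hF0 : p 0 ^ 2 - p 1 ^ 3 - p 2 ^ 2 + p 3 ^ 3 + (-5 * s ^ 3 / 108) +
        s ^ 2 / 4 * p 1 - s ^ 2 / 4 * p 3 + s * (p 1 * p 3) = 0 := by
      simp [Fdef] at hF; linear_combination hF
    have hx : p 0 = 0 := by linear_combination h0 / 2
    have hz : p 2 = 0 := by linear_combination -h2 / 2
    have key : p 1 = s / 6 ∧ p 3 = -s / 6 := by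
      have hsum : (p 1 + p 3) * (s - 3 * p 1 + 3 * p 3) = 0 := by linear_combination h1 + h3
      rcases mul_eq_zero.mp hsum with ha | hb
      · have h' : (p 1 - s / 6) * (p 1 + s / 2) = 0 := by
          linear_combination (-1/3) * h1 + (s/3) * ha
        rcases mul_eq_zero.mp h' with hy | hy
        · have hy1 : p 1 = s / 6 := by linear_combination hy
          exact ⟨hy1, by linear_combination ha - hy⟩
        · have hy1 : p 1 = -s / 2 := by linear_combination hy
          have hw : p 3 = s / 2 := by linear_combination ha - hy
          have hs3 : s ^ 3 = 0 := by
            rw [hx, hz, hy1, hw] at hF0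
            linear_combination (-27/8) * hF0
          have hs : s = 0 := by
            have := pow_eq_zero_iff (n := 3) (by norm_num) |>.mp hs3
            exact this
          constructor <;> rw [hs] at hy1 hw ⊢ <;> simp [hy1, hw]
      · have hsq : (p 1 - s / 6) ^ 2 = 0 := by
          linear_combination (-1/3) * h1 + (s/9) * hb
        have hy1 : p 1 = s / 6 := by
          have := pow_eq_zero_iff (n := 2) (by norm_num) |>.mp hsq
          linear_combination this
        exact ⟨hy1, by linear_combination (1/3) * hb + hy1⟩
    funext i
    fin_cases i <;> simp [hx, hz, key.1, key.2]
  · rintro rfl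
    constructor
    · simp [Fdef]
      ring
    · intro i
      fin_cases i <;> simp [Fdef] <;> ring
end

section
/- Let ε ∈ ℂ be a primitive cube root of unity and let σ ∈ ℂ with σ ≠ 0. Then the polynomial F(x,y,z,w) = x² − y³ − z² + w³ + σ³/27 + σ·y·w has exactly three singular points, the pairwise distinct points (0, −σ/3, 0, σ/3), (0, −εσ/3, 0, ε²σ/3), (0, −ε²σ/3, 0, εσ/3); moreover at each of these three points the 4×4 Hessian matrix of F is invertible, i.e., each singular point is an ordinary double point (node). -/
open MvPolynomial

/-- The Hessian matrix of second partial derivatives of `F_{λ,μ,ν,σ}` at a point `p ∈ ℂ⁴`. -/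
noncomputable def hessF (l m n s : ℂ) (p : Fin 4 → ℂ) : Matrix (Fin 4) (Fin 4) ℂ :=
  Matrix.of fun i j => eval p (pderiv i (pderiv j (Fdef l m n s)))

lemma evalF (l m n s : ℂ) (p : Fin 4 → ℂ) :
    eval p (Fdef l m n s) =
      (p 0)^2 - (p 1)^3 - (p 2)^2 + (p 3)^3 + l + m * p 1 - n * p 3 + s * (p 1 * p 3) := by
  simp [Fdef]

lemma pd0 (l m n s : ℂ) : pderiv 0 (Fdef l m n s) = C 2 * X 0 := by
  simp [Fdef, pderiv_X, Derivation.leibniz_pow, map_ofNat]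
lemma pd1 (l m n s : ℂ) : pderiv 1 (Fdef l m n s) = -(C 3 * X 1 ^ 2) + C m + C s * X 3 := by
  simp [Fdef, pderiv_X, Derivation.leibniz_pow, map_ofNat]
lemma pd2 (l m n s : ℂ) : pderiv 2 (Fdef l m n s) = -(C 2 * X 2) := by
  simp [Fdef, pderiv_X, Derivation.leibniz_pow, map_ofNat]
lemma pd3 (l m n s : ℂ) : pderiv 3 (Fdef l m n s) = C 3 * X 3 ^ 2 - C n + C s * X 1 := by
  simp [Fdef, pderiv_X, Derivation.leibniz_pow, map_ofNat]

lemma evalD0 (l m n s : ℂ) (p : Fin 4 → ℂ) :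
    eval p (pderiv 0 (Fdef l m n s)) = 2 * p 0 := by simp [pd0]
lemma evalD1 (l m n s : ℂ) (p : Fin 4 → ℂ) :
    eval p (pderiv 1 (Fdef l m n s)) = -(3 * (p 1)^2) + m + s * p 3 := by simp [pd1]
lemma evalD2 (l m n s : ℂ) (p : Fin 4 → ℂ) :
    eval p (pderiv 2 (Fdef l m n s)) = -(2 * p 2) := by simp [pd2]
lemma evalD3 (l m n s : ℂ) (p : Fin 4 → ℂ) :
    eval p (pderiv 3 (Fdef l m n s)) = 3 * (p 3)^2 - n + s * p 1 := by simp [pd3]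

lemma isSingPt_iff (l m n s : ℂ) (p : Fin 4 → ℂ) :
    IsSingPt l m n s p ↔
      ((p 0)^2 - (p 1)^3 - (p 2)^2 + (p 3)^3 + l + m * p 1 - n * p 3 + s * (p 1 * p 3) = 0 ∧
       2 * p 0 = 0 ∧ (-(3 * (p 1)^2) + m + s * p 3 = 0) ∧ -(2 * p 2) = 0 ∧
       (3 * (p 3)^2 - n + s * p 1 = 0)) := by
  constructor
  · rintro ⟨h0, hd⟩
    refine ⟨by rw [← evalF]; exact h0, by rw [← evalD0]; exact hd 0, by rw [← evalD1]; exact hd 1,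
      by rw [← evalD2]; exact hd 2, by rw [← evalD3]; exact hd 3⟩
  · rintro ⟨h0, h1, h2, h3, h4⟩
    refine ⟨by rw [evalF]; exact h0, fun i => ?_⟩
    match i with
    | 0 => rw [evalD0]; exact h1
    | 1 => rw [evalD1]; exact h2
    | 2 => rw [evalD2]; exact h3
    | 3 => rw [evalD3]; exact h4

lemma hess_eq (l m n s : ℂ) (p : Fin 4 → ℂ) :
    hessF l m n s p = !![2,0,0,0; 0, -6*p 1, 0, s; 0,0,-2,0; 0, s, 0, 6*p 3] := by
  ext i j
  fin_cases i <;> fin_cases j <;>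
    simp [hessF, pd0, pd1, pd2, pd3, pderiv_X, pderiv_C, Derivation.leibniz_pow,
      Matrix.vecHead, Matrix.vecTail] <;> ring

/-- For `ε` a primitive cube root of unity and `σ ≠ 0`, the polynomial
`F = x² − y³ − z² + w³ + σ³/27 + σyw` has exactly three singular points, the pairwise
distinct points `(0, −σ/3, 0, σ/3)`, `(0, −εσ/3, 0, ε²σ/3)`, `(0, −ε²σ/3, 0, εσ/3)`,
and at each of them the Hessian matrix of `F` is invertible (each is a node). -/
theorem stmt_12 (ε : ℂ) (hε : ε ≠ 1) (hε3 : ε ^ 3 = 1) (s : ℂ) (hs : s ≠ 0) :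
    {p : Fin 4 → ℂ | IsSingPt (s ^ 3 / 27) 0 0 s p} =
      {![0, -s / 3, 0, s / 3], ![0, -(ε * s) / 3, 0, ε ^ 2 * s / 3],
        ![0, -(ε ^ 2 * s) / 3, 0, ε * s / 3]} ∧
    (![0, -s / 3, 0, s / 3] : Fin 4 → ℂ) ≠ ![0, -(ε * s) / 3, 0, ε ^ 2 * s / 3] ∧
    (![0, -s / 3, 0, s / 3] : Fin 4 → ℂ) ≠ ![0, -(ε ^ 2 * s) / 3, 0, ε * s / 3] ∧
    (![0, -(ε * s) / 3, 0, ε ^ 2 * s / 3] : Fin 4 → ℂ) ≠ ![0, -(ε ^ 2 * s) / 3, 0, ε * s / 3] ∧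
    IsUnit (hessF (s ^ 3 / 27) 0 0 s ![0, -s / 3, 0, s / 3]) ∧
    IsUnit (hessF (s ^ 3 / 27) 0 0 s ![0, -(ε * s) / 3, 0, ε ^ 2 * s / 3]) ∧
    IsUnit (hessF (s ^ 3 / 27) 0 0 s ![0, -(ε ^ 2 * s) / 3, 0, ε * s / 3]) := by
  have hε2 : ε ^ 2 + ε + 1 = 0 := by
    have h := hε3
    have : (ε - 1) * (ε ^ 2 + ε + 1) = 0 := by linear_combination hε3
    rcases mul_eq_zero.mp this with h' | h'
    · exact absurd (by linear_combination h') hε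
    · exact h'
  have hεne0 : ε ≠ 0 := by
    intro h; rw [h] at hε3; norm_num at hε3
  have hε2ne1 : ε ^ 2 ≠ 1 := by
    intro h
    exact hε (by calc ε = ε * 1 := by ring
      _ = ε * ε ^ 2 := by rw [h]
      _ = 1 := by linear_combination hε3)
  have hεneε2 : ε ^ 2 ≠ ε := by
    intro h
    have h' : ε * (ε - 1) = 0 := by linear_combination h
    rcases mul_eq_zero.mp h' with h'' | h''
    · exact hεne0 h''
    · exact hε (by linear_combination h'')
  constructor
  · ext p
    simp only [Set.mem_setOf_eq, Set.mem_insert_iff, Set.mem_singleton_iff, isSingPt_iff]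
    constructor
    · rintro ⟨h0, h1, h2, h3, h4⟩
      have e0 : p 0 = 0 := by linear_combination h1 / 2
      have e2 : p 2 = 0 := by linear_combination -h3 / 2
      have key : p 3 * ((3 * p 3 - s) * ((3 * p 3 - ε * s) * (3 * p 3 - ε ^ 2 * s))) = 0 := by
        linear_combination (-9*s*(p 3)^3 + 3*s^2*(p 3)^2) * hε2 +
          (3*s^2*(p 3)^2 - s^3*(p 3)) * hε3 + (-s^2) * h2 + (-3*(s*(p 1) - 3*(p 3)^2)) * h4
      rcases mul_eq_zero.mp key with hb0 | key
      · exfalso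
        have ha0 : p 1 = 0 := by
          have : s * p 1 = s * 0 := by linear_combination h4 - (3 * p 3) * hb0
          exact mul_left_cancel₀ hs this
        apply pow_ne_zero 3 hs
        linear_combination 27 * h0 + (27*(p 1)^2 - 27*s*(p 3)) * ha0 +
          (-27*(p 3)^2) * hb0 + (-27*(p 0)) * e0 + (27*(p 2)) * e2
      rcases mul_eq_zero.mp key with hc | key
      · left
        have hb : p 3 = s / 3 := by linear_combination hc / 3
        have ha : p 1 = -s / 3 := by
          have hsa : s * p 1 = s * (-s / 3) := by
            linear_combination h4 - (p 3 + s / 3) * hc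
          exact mul_left_cancel₀ hs hsa
        funext i
        fin_cases i <;> simp [e0, e2, ha, hb]
      rcases mul_eq_zero.mp key with hc | hc
      · right; right
        have hb : p 3 = ε * s / 3 := by linear_combination hc / 3
        have ha : p 1 = -(ε ^ 2 * s) / 3 := by
          have hsa : s * p 1 = s * (-(ε ^ 2 * s) / 3) := by
            linear_combination h4 - (p 3 + ε * s / 3) * hc
          exact mul_left_cancel₀ hs hsa
        funext i
        fin_cases i <;> simp [e0, e2, ha, hb]
      · right; left
        have hb : p 3 = ε ^ 2 * s / 3 := by linear_combination hc / 3
        have ha : p 1 = -(ε * s) / 3 := by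
          have hsa : s * p 1 = s * (-(ε * s) / 3) := by
            linear_combination h4 - (p 3 + ε ^ 2 * s / 3) * hc - (ε * s ^ 2 / 3) * hε3
          exact mul_left_cancel₀ hs hsa
        funext i
        fin_cases i <;> simp [e0, e2, ha, hb]
    · rintro (rfl | rfl | rfl) <;>
        refine ⟨?_, ?_, ?_, ?_, ?_⟩ <;> simp <;>
        first
          | ring1
          | linear_combination (s^3/27) * (ε^3-1) * hε3
          | linear_combination (-(ε*s^2)/3) * hε3
          | linear_combination ((ε*s^2)/3) * hε3
  refine ⟨?_, ?_, ?_, ?_, ?_, ?_⟩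
  · intro h
    have h3 : s / 3 = ε ^ 2 * s / 3 := congrFun h 3
    have hq : ε ^ 2 * s = 1 * s := by linear_combination -3 * h3
    exact hε2ne1 (by linear_combination mul_right_cancel₀ hs hq)
  · intro h
    have h3 : s / 3 = ε * s / 3 := congrFun h 3
    have hq : ε * s = 1 * s := by linear_combination -3 * h3
    exact hε (by linear_combination mul_right_cancel₀ hs hq)
  · intro h
    have h3 : ε ^ 2 * s / 3 = ε * s / 3 := congrFun h 3
    have hq : ε ^ 2 * s = ε * s := by linear_combination 3 * h3
    exact hεneε2 (mul_right_cancel₀ hs hq)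
  all_goals {
    rw [hess_eq, Matrix.isUnit_iff_isUnit_det, isUnit_iff_ne_zero]
    intro hd
    apply pow_ne_zero 2 hs
    simp [Matrix.det_succ_row_zero, Fin.sum_univ_succ, Matrix.vecHead, Matrix.vecTail] at hd
    first
      | linear_combination -hd / 6
      | linear_combination -hd / 6 - (4*s^2/3) * hε3
  }
end

section
/- For (λ, μ, ν, σ) ∈ ℂ⁴, the polynomial F_{λ,μ,ν,σ} has exactly three pairwise distinct singular points in ℂ⁴ if and only if μ = 0, ν = 0, σ³ = 27λ, and σ ≠ 0. (Hence the locus of the Kuranishi space T¹ parameterizing deformations of the threefold cusp to three distinct nodes is the smooth plane curve C = {σ³ − 27λ = μ = ν = 0} minus the origin, and C meets the hyperplane {σ = 0} transversally at the origin.) -/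
open MvPolynomial

lemma sing_iff (l m n s : ℂ) (p : Fin 4 → ℂ) :
    IsSingPt l m n s p ↔
      (p 0 ^ 2 - p 1 ^ 3 - p 2 ^ 2 + p 3 ^ 3 + l + m * p 1 - n * p 3 + s * (p 1 * p 3) = 0 ∧
       p 0 = 0 ∧ (-(3 * p 1 ^ 2) + m + s * p 3 = 0) ∧ p 2 = 0 ∧
       (3 * p 3 ^ 2 - n + s * p 1 = 0)) := by
  unfold IsSingPt Fdef
  rw [Fin.forall_fin_succ, Fin.forall_fin_succ, Fin.forall_fin_succ, Fin.forall_fin_one]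
  simp [pderiv_X, Pi.single_apply, Fin.succ]

lemma quad_zero {a b c y1 y2 y3 : ℂ} (h12 : y1 ≠ y2) (h13 : y1 ≠ y3) (h23 : y2 ≠ y3)
    (e1 : a * y1 ^ 2 + b * y1 + c = 0) (e2 : a * y2 ^ 2 + b * y2 + c = 0)
    (e3 : a * y3 ^ 2 + b * y3 + c = 0) : a = 0 ∧ b = 0 ∧ c = 0 := by
  have d12 : (y1 - y2) * (a * (y1 + y2) + b) = 0 := by linear_combination e1 - e2
  have d13 : (y1 - y3) * (a * (y1 + y3) + b) = 0 := by linear_combination e1 - e3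
  have h12' : a * (y1 + y2) + b = 0 :=
    (mul_eq_zero.1 d12).resolve_left (sub_ne_zero.2 h12)
  have h13' : a * (y1 + y3) + b = 0 :=
    (mul_eq_zero.1 d13).resolve_left (sub_ne_zero.2 h13)
  have ha : a * (y2 - y3) = 0 := by linear_combination h12' - h13'
  have ha0 : a = 0 := (mul_eq_zero.1 ha).resolve_right (sub_ne_zero.2 h23)
  have hb0 : b = 0 := by linear_combination h12' - (y1 + y2) * ha0
  exact ⟨ha0, hb0, by linear_combination e1 - y1 ^ 2 * ha0 - y1 * hb0⟩

lemma s0_pair {l n w1 w2 : ℂ} (hw : w1 ≠ w2)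
    (hG1 : 3 * w1 ^ 2 - n = 0) (hG2 : 3 * w2 ^ 2 - n = 0)
    (hL1 : 3 * l - 2 * n * w1 = 0) (hL2 : 3 * l - 2 * n * w2 = 0) : False := by
  have hn : n * (w2 - w1) = 0 := by linear_combination (1/2) * hL1 - (1/2) * hL2
  have hn0 : n = 0 := (mul_eq_zero.1 hn).resolve_right (sub_ne_zero.2 (Ne.symm hw))
  have hw1 : w1 = 0 := by
    have : w1 ^ 2 = 0 := by linear_combination (1/3) * hG1 + (1/3) * hn0
    exact pow_eq_zero_iff (by norm_num) |>.1 this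
  have hw2 : w2 = 0 := by
    have : w2 ^ 2 = 0 := by linear_combination (1/3) * hG2 + (1/3) * hn0
    exact pow_eq_zero_iff (by norm_num) |>.1 this
  exact hw (hw1.trans hw2.symm)

-- forward direction, s ≠ 0 case, after extracting coordinates
lemma fwd_sne {l m n s y1 w1 y2 w2 y3 w3 : ℂ} (hs : s ≠ 0)
    (hne12 : ¬(y1 = y2 ∧ w1 = w2)) (hne13 : ¬(y1 = y3 ∧ w1 = w3))
    (hne23 : ¬(y2 = y3 ∧ w2 = w3))
    (hF1 : - y1 ^ 3 + w1 ^ 3 + l + m * y1 - n * w1 + s * (y1 * w1) = 0)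
    (hE1 : -(3 * y1 ^ 2) + m + s * w1 = 0) (hG1 : 3 * w1 ^ 2 - n + s * y1 = 0)
    (hF2 : - y2 ^ 3 + w2 ^ 3 + l + m * y2 - n * w2 + s * (y2 * w2) = 0)
    (hE2 : -(3 * y2 ^ 2) + m + s * w2 = 0) (hG2 : 3 * w2 ^ 2 - n + s * y2 = 0)
    (hF3 : - y3 ^ 3 + w3 ^ 3 + l + m * y3 - n * w3 + s * (y3 * w3) = 0)
    (hE3 : -(3 * y3 ^ 2) + m + s * w3 = 0) (hG3 : 3 * w3 ^ 2 - n + s * y3 = 0) :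
    m = 0 ∧ n = 0 ∧ s ^ 3 = 27 * l := by
  -- the y-coordinates are pairwise distinct
  have hyne : ∀ {y w y' w' : ℂ}, ¬(y = y' ∧ w = w') →
      (-(3 * y ^ 2) + m + s * w = 0) → (-(3 * y' ^ 2) + m + s * w' = 0) → y ≠ y' := by
    intro y w y' w' hne hE hE' h
    subst h
    refine hne ⟨rfl, ?_⟩
    have : s * (w - w') = 0 := by linear_combination hE - hE'
    exact sub_eq_zero.1 ((mul_eq_zero.1 this).resolve_left hs)
  have h12 : y1 ≠ y2 := hyne hne12 hE1 hE2
  have h13 : y1 ≠ y3 := hyne hne13 hE1 hE3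
  have h23 : y2 ≠ y3 := hyne hne23 hE2 hE3
  -- cubic and quartic conditions, reduced mod the cubic with roots y1 y2 y3
  have qC1 : (3*s*(y1+y2+y3) - 6*n) * y1 ^ 2 + (m*s - 3*s*(y1*y2+y1*y3+y2*y3)) * y1 +
      (3*s*(y1*y2*y3) + 3*l*s + 2*m*n) = 0 := by
    linear_combination 3*s*hF1 + (2*n - 2*s*y1)*hE1 - s*w1*hG1
  have qC2 : (3*s*(y1+y2+y3) - 6*n) * y2 ^ 2 + (m*s - 3*s*(y1*y2+y1*y3+y2*y3)) * y2 +
      (3*s*(y1*y2*y3) + 3*l*s + 2*m*n) = 0 := by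
    linear_combination 3*s*hF2 + (2*n - 2*s*y2)*hE2 - s*w2*hG2
  have qC3 : (3*s*(y1+y2+y3) - 6*n) * y3 ^ 2 + (m*s - 3*s*(y1*y2+y1*y3+y2*y3)) * y3 +
      (3*s*(y1*y2*y3) + 3*l*s + 2*m*n) = 0 := by
    linear_combination 3*s*hF3 + (2*n - 2*s*y3)*hE3 - s*w3*hG3
  have qQ1 : (27*((y1+y2+y3)^2 - (y1*y2+y1*y3+y2*y3)) - 18*m) * y1 ^ 2 +
      (27*((y1*y2*y3) - (y1+y2+y3)*(y1*y2+y1*y3+y2*y3)) + s^3) * y1 +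
      (27*(y1+y2+y3)*(y1*y2*y3) + 3*m^2 - s^2*n) = 0 := by
    linear_combination (3*(-(3*y1^2) + m + s*w1) - 6*s*w1)*hE1 + s^2*hG1
  have qQ2 : (27*((y1+y2+y3)^2 - (y1*y2+y1*y3+y2*y3)) - 18*m) * y2 ^ 2 +
      (27*((y1*y2*y3) - (y1+y2+y3)*(y1*y2+y1*y3+y2*y3)) + s^3) * y2 +
      (27*(y1+y2+y3)*(y1*y2*y3) + 3*m^2 - s^2*n) = 0 := by
    linear_combination (3*(-(3*y2^2) + m + s*w2) - 6*s*w2)*hE2 + s^2*hG2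
  have qQ3 : (27*((y1+y2+y3)^2 - (y1*y2+y1*y3+y2*y3)) - 18*m) * y3 ^ 2 +
      (27*((y1*y2*y3) - (y1+y2+y3)*(y1*y2+y1*y3+y2*y3)) + s^3) * y3 +
      (27*(y1+y2+y3)*(y1*y2*y3) + 3*m^2 - s^2*n) = 0 := by
    linear_combination (3*(-(3*y3^2) + m + s*w3) - 6*s*w3)*hE3 + s^2*hG3
  obtain ⟨c1, c2, c3⟩ := quad_zero h12 h13 h23 qC1 qC2 qC3
  obtain ⟨q1, q2, q3⟩ := quad_zero h12 h13 h23 qQ1 qQ2 qQ3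
  set E1 := y1 + y2 + y3 with hE1d
  set E2 := y1*y2 + y1*y3 + y2*y3 with hE2d
  set E3 := y1*y2*y3 with hE3d
  -- m = 3 E2
  have hm : m = 3 * E2 := by
    have h : s * (m - 3 * E2) = 0 := by linear_combination c2
    exact sub_eq_zero.1 ((mul_eq_zero.1 h).resolve_left hs)
  have hn2 : s * E1 = 2 * n := by linear_combination (1/3) * c1
  have h12' : E1 ^ 2 = 3 * E2 := by linear_combination (1/27) * q1 + (2/3) * hm
  have hmE : m = E1 ^ 2 := by linear_combination hm - h12'
  have h27e3 : 27 * E3 = 9 * E1 ^ 3 - s ^ 3 := by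
    linear_combination q2 - 9 * E1 * h12'
  have hq3' : E1 * (24 * E1 ^ 3 - 3 * s ^ 3) = 0 := by
    linear_combination 2 * q3 - 2 * E1 * h27e3 - 6 * (m + E1 ^ 2) * hmE - s ^ 2 * hn2
  rcases mul_eq_zero.1 hq3' with hE10 | h8
  · -- E1 = 0 : the good branch
    have hn0 : n = 0 := by linear_combination (s/2) * hE10 - (1/2) * hn2
    have hm0 : m = 0 := by linear_combination hm - h12' + E1 * hE10
    have hc3' : 3 * s * (E3 + l) = 0 := by linear_combination c3 - 2 * n * hm0
    have hE3l : E3 = -l := by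
      have h3s : (3 : ℂ) * s ≠ 0 := mul_ne_zero (by norm_num) hs
      have := (mul_eq_zero.1 hc3').resolve_left h3s
      linear_combination this
    exact ⟨hm0, hn0, by linear_combination h27e3 - 27 * hE3l + 9 * E1 ^ 2 * hE10⟩
  · -- 8 E1³ = s³ : triple root, contradiction with distinctness
    exfalso
    have hE3c : 27 * E3 = E1 ^ 3 := by linear_combination h27e3 + (1/3) * h8
    have ht1 : (y1 - E1/3) ^ 3 = 0 := by
      linear_combination (y1/3) * h12' + (1/27) * hE3c - y1 ^ 2 * hE1d + y1 * hE2d - hE3d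
    have ht2 : (y2 - E1/3) ^ 3 = 0 := by
      linear_combination (y2/3) * h12' + (1/27) * hE3c - y2 ^ 2 * hE1d + y2 * hE2d - hE3d
    have e1 : y1 = E1/3 := sub_eq_zero.1 (pow_eq_zero_iff (by norm_num) |>.1 ht1)
    have e2 : y2 = E1/3 := sub_eq_zero.1 (pow_eq_zero_iff (by norm_num) |>.1 ht2)
    exact h12 (e1.trans e2.symm)

lemma bwd {l s : ℂ} (hl : s ^ 3 = 27 * l) (hs : s ≠ 0) :
    {p : Fin 4 → ℂ | IsSingPt l 0 0 s p}.encard = 3 := by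
  obtain ⟨ζ, hζ⟩ : ∃ z : ℂ, IsPrimitiveRoot z 3 :=
    ⟨_, Complex.isPrimitiveRoot_exp 3 (by norm_num)⟩
  have hζ3 : ζ ^ 3 = 1 := hζ.pow_eq_one
  have hζ1 : ζ ≠ 1 := hζ.ne_one (by norm_num)
  have hζ21 : ζ ^ 2 ≠ 1 := hζ.pow_ne_one_of_pos_of_lt (by norm_num) (by norm_num)
  have hζ0 : ζ ≠ 0 := fun h => by simp [h] at hζ3
  have hζ2ζ : ζ ^ 2 ≠ ζ := by
    intro h
    exact hζ1 (mul_left_cancel₀ hζ0 (by linear_combination h))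
  have hsum : ζ ^ 2 + ζ + 1 = 0 := by
    have h : (ζ - 1) * (ζ ^ 2 + ζ + 1) = 0 := by linear_combination hζ3
    exact (mul_eq_zero.1 h).resolve_left (sub_ne_zero.2 hζ1)
  set P : ℂ → (Fin 4 → ℂ) := fun t => ![0, -(s * t) / 3, 0, s * t ^ 2 / 3] with hP
  have hmem : ∀ t : ℂ, t ^ 3 = 1 → IsSingPt l 0 0 s (P t) := by
    intro t ht
    rw [sing_iff]
    refine ⟨?_, rfl, ?_, rfl, ?_⟩
    · show (0:ℂ) ^ 2 - (-(s * t) / 3) ^ 3 - (0:ℂ) ^ 2 + (s * t ^ 2 / 3) ^ 3 + l + 0 * _ - 0 * _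
        + s * (-(s * t) / 3 * (s * t ^ 2 / 3)) = 0
      linear_combination (s ^ 3 / 27 * (t ^ 3 - 1)) * ht - (1 / 27) * hl
    · show -(3 * (-(s * t) / 3) ^ 2) + 0 + s * (s * t ^ 2 / 3) = 0
      ring
    · show 3 * (s * t ^ 2 / 3) ^ 2 - 0 + s * (-(s * t) / 3) = 0
      linear_combination (s ^ 2 * t / 3) * ht
  have hPinj : ∀ t t' : ℂ, P t = P t' → t = t' := by
    intro t t' h
    have h1 := congrFun h 1
    simp only [hP, Matrix.cons_val_one, Matrix.head_cons] at h1
    have h1' : -(s * t) / 3 = -(s * t') / 3 := h1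
    have h2 : s * (t - t') = 0 := by linear_combination (-3) * h1'
    exact sub_eq_zero.1 ((mul_eq_zero.1 h2).resolve_left hs)
  have hseteq : {p : Fin 4 → ℂ | IsSingPt l 0 0 s p} = {P 1, P ζ, P (ζ ^ 2)} := by
    ext p
    simp only [Set.mem_setOf_eq, Set.mem_insert_iff, Set.mem_singleton_iff]
    constructor
    · intro h
      rw [sing_iff] at h
      obtain ⟨hF, h0, hE, h2, hG⟩ := h
      by_cases hy : p 1 = 0
      · exfalso
        have hp3 : s * p 3 = 0 := by linear_combination hE + 3 * (p 1 + 0) * hy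
        have hp30 : p 3 = 0 := by
          rcases mul_eq_zero.1 hp3 with h | h
          exacts [absurd h hs, h]
        have hl0 : l = 0 := by
          linear_combination hF - (p 0) * h0 + (p 2) * h2 + (p 1 ^ 2) * hy
            - (s * p 1 + p 3 ^ 2) * hp30
        have : s ^ 3 = 0 := by rw [hl, hl0]; ring
        exact hs (pow_eq_zero_iff (by norm_num) |>.1 this)
      · have key : p 1 * (27 * p 1 ^ 3 + s ^ 3) = 0 := by
          linear_combination s ^ 2 * hG + (-(3 * (-(3 * p 1 ^ 2) + 0 + s * p 3)) - 18 * p 1 ^ 2) * hE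
        have hq : 27 * p 1 ^ 3 + s ^ 3 = 0 := (mul_eq_zero.1 key).resolve_left hy
        set t : ℂ := -3 * p 1 / s with htd
        have ht3 : t ^ 3 = 1 := by
          rw [htd]
          field_simp
          linear_combination -hq
        have hpt : p = P t := by
          funext i
          fin_cases i
          · exact h0
          · show p 1 = -(s * t) / 3
            rw [htd]; field_simp
          · exact h2
          · show p 3 = s * t ^ 2 / 3
            rw [htd]
            have hsp3 : s * p 3 = 3 * p 1 ^ 2 := by linear_combination hE
            field_simp
            linear_combination hsp3
        have hfac : (t - 1) * ((t - ζ) * (t - ζ ^ 2)) = 0 := by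
          linear_combination ht3 + (t - t ^ 2) * hsum + (t - 1) * hζ3
        rcases mul_eq_zero.1 hfac with h | h
        · left; rw [hpt, sub_eq_zero.1 h]
        · rcases mul_eq_zero.1 h with h | h
          · right; left; rw [hpt, sub_eq_zero.1 h]
          · right; right; rw [hpt, sub_eq_zero.1 h]
    · rintro (rfl | rfl | rfl)
      · exact hmem 1 (by norm_num)
      · exact hmem ζ hζ3
      · exact hmem (ζ ^ 2) (by rw [← pow_mul]; rw [show 2 * 3 = 3 * 2 by ring, pow_mul, hζ3]; norm_num)
  rw [hseteq]
  rw [Set.encard_eq_three]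
  refine ⟨P 1, P ζ, P (ζ ^ 2), ?_, ?_, ?_, rfl⟩
  · exact fun h => hζ1 (hPinj 1 ζ h).symm
  · exact fun h => hζ21 (hPinj 1 (ζ ^ 2) h).symm
  · exact fun h => hζ2ζ (hPinj ζ (ζ ^ 2) h).symm

/-- `F_{λ,μ,ν,σ}` has exactly three pairwise distinct singular points iff `μ = 0`, `ν = 0`,
`σ³ = 27λ` and `σ ≠ 0`: the locus of the Kuranishi space parameterizing deformations of the
threefold cusp to three distinct nodes is the curve `{σ³ − 27λ = μ = ν = 0}` minus the
origin. -/
theorem stmt_13 (l m n s : ℂ) :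
    {p : Fin 4 → ℂ | IsSingPt l m n s p}.encard = 3 ↔
      (m = 0 ∧ n = 0 ∧ s ^ 3 = 27 * l ∧ s ≠ 0) := by
  constructor
  · intro h
    obtain ⟨a, b, c, hab, hac, hbc, hset⟩ := Set.encard_eq_three.mp h
    have ha : IsSingPt l m n s a := by
      have : a ∈ {p : Fin 4 → ℂ | IsSingPt l m n s p} := by rw [hset]; simp
      exact this
    have hb : IsSingPt l m n s b := by
      have : b ∈ {p : Fin 4 → ℂ | IsSingPt l m n s p} := by rw [hset]; simp
      exact this
    have hc : IsSingPt l m n s c := by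
      have : c ∈ {p : Fin 4 → ℂ | IsSingPt l m n s p} := by rw [hset]; simp
      exact this
    rw [sing_iff] at ha hb hc
    obtain ⟨aF, a0, aE, a2, aG⟩ := ha
    obtain ⟨bF, b0, bE, b2, bG⟩ := hb
    obtain ⟨cF, c0, cE, c2, cG⟩ := hc
    -- distinct points have distinct (y, w)
    have key : ∀ u v : Fin 4 → ℂ, u ≠ v → u 0 = 0 → u 2 = 0 → v 0 = 0 → v 2 = 0 →
        ¬(u 1 = v 1 ∧ u 3 = v 3) := by
      rintro u v huv hu0 hu2 hv0 hv2 ⟨h1, h3⟩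
      apply huv
      funext i
      fin_cases i
      · exact hu0.trans hv0.symm
      · exact h1
      · exact hu2.trans hv2.symm
      · exact h3
    have hne12 := key a b hab a0 a2 b0 b2
    have hne13 := key a c hac a0 a2 c0 c2
    have hne23 := key b c hbc b0 b2 c0 c2
    by_cases hs : s = 0
    · exfalso
      subst hs
      -- the L equations
      have aL : 3 * l + 2 * m * a 1 - 2 * n * a 3 = 0 := by
        linear_combination 3 * aF - 3 * (a 0) * a0 + 3 * (a 2) * a2 - (a 1) * aE - (a 3) * aG
      have bL : 3 * l + 2 * m * b 1 - 2 * n * b 3 = 0 := by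
        linear_combination 3 * bF - 3 * (b 0) * b0 + 3 * (b 2) * b2 - (b 1) * bE - (b 3) * bG
      have cL : 3 * l + 2 * m * c 1 - 2 * n * c 3 = 0 := by
        linear_combination 3 * cF - 3 * (c 0) * c0 + 3 * (c 2) * c2 - (c 1) * cE - (c 3) * cG
      -- distinct points have distinct y when s = 0
      have ykey : ∀ y1 w1 y2 w2 : ℂ, ¬(y1 = y2 ∧ w1 = w2) →
          (3 * w1 ^ 2 - n + 0 * y1 = 0) → (3 * w2 ^ 2 - n + 0 * y2 = 0) →
          (3 * l + 2 * m * y1 - 2 * n * w1 = 0) → (3 * l + 2 * m * y2 - 2 * n * w2 = 0) →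
          y1 ≠ y2 := by
        intro y1 w1 y2 w2 hne hG1 hG2 hL1 hL2 hy
        subst hy
        have hw : w1 ≠ w2 := fun hw => hne ⟨rfl, hw⟩
        exact s0_pair (l := l + 2 / 3 * m * y1) (n := n) hw
          (by linear_combination hG1) (by linear_combination hG2)
          (by linear_combination hL1) (by linear_combination hL2)
      have hy12 : a 1 ≠ b 1 := ykey _ _ _ _ hne12 aG bG aL bL
      have hy13 : a 1 ≠ c 1 := ykey _ _ _ _ hne13 aG cG aL cL
      have hy23 : b 1 ≠ c 1 := ykey _ _ _ _ hne23 bG cG bL cL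
      -- but all y's square to m/3
      have s12 : (a 1 - b 1) * (a 1 + b 1) = 0 := by linear_combination (-1/3) * aE + (1/3) * bE
      have s13 : (a 1 - c 1) * (a 1 + c 1) = 0 := by linear_combination (-1/3) * aE + (1/3) * cE
      have hb1 : b 1 = -(a 1) := by
        have h := (mul_eq_zero.1 s12).resolve_left (sub_ne_zero.2 hy12)
        linear_combination h
      have hc1 : c 1 = -(a 1) := by
        have h := (mul_eq_zero.1 s13).resolve_left (sub_ne_zero.2 hy13)
        linear_combination h
      exact hy23 (hb1.trans hc1.symm)
    · -- s ≠ 0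
      have aF' : - (a 1) ^ 3 + (a 3) ^ 3 + l + m * a 1 - n * a 3 + s * (a 1 * a 3) = 0 := by
        linear_combination aF - (a 0) * a0 + (a 2) * a2
      have bF' : - (b 1) ^ 3 + (b 3) ^ 3 + l + m * b 1 - n * b 3 + s * (b 1 * b 3) = 0 := by
        linear_combination bF - (b 0) * b0 + (b 2) * b2
      have cF' : - (c 1) ^ 3 + (c 3) ^ 3 + l + m * c 1 - n * c 3 + s * (c 1 * c 3) = 0 := by
        linear_combination cF - (c 0) * c0 + (c 2) * c2
      obtain ⟨hm, hn, hsl⟩ := fwd_sne hs hne12 hne13 hne23 aF' aE aG bF' bE bG cF' cE cG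
      exact ⟨hm, hn, hsl, hs⟩
  · rintro ⟨rfl, rfl, hl, hs⟩
    exact bwd hl hs
end

section
/- Let ε ∈ ℂ be a primitive cube root of unity and α, β, γ ∈ ℂ with α + εβ + ε²γ = 0. Set y₁ = (εβ − γ)/(1 − ε) and v₁ = (β − γ)/(ε(1 − ε)). Then in ℂ[Y,V] the following identity holds: (Y + y₁ − (V + v₁) + α)·(Y + y₁ − ε(V + v₁) + β)·(Y + y₁ − ε²(V + v₁) + γ) = Y³ − V³. (Hence for parameters on the plane π = {α + εβ + ε²γ = 0} the deformation G = X² − U² − (Y − V + α)(Y − εV + β)(Y − ε²V + γ) of the threefold cusp is, after a translation, equal to the cusp X² − U² − Y³ + V³ itself, i.e., the deformation over π is trivial.) -/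
open MvPolynomial

/-- For `ε` a primitive cube root of unity and `α + εβ + ε²γ = 0`, translating by the
singular point `(y₁, v₁)` with `y₁ = (εβ−γ)/(1−ε)`, `v₁ = (β−γ)/(ε(1−ε))` trivializes the
deformation: in `ℂ[Y,V]` (with `Y = X 0`, `V = X 1`)
`(Y + y₁ − (V + v₁) + α)(Y + y₁ − ε(V + v₁) + β)(Y + y₁ − ε²(V + v₁) + γ) = Y³ − V³`. -/
theorem stmt_18 (ε : ℂ) (hε : ε ≠ 1) (hε3 : ε ^ 3 = 1) (α β γ : ℂ)
    (h : α + ε * β + ε ^ 2 * γ = 0)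
    (y₁ v₁ : ℂ) (hy₁ : y₁ = (ε * β - γ) / (1 - ε)) (hv₁ : v₁ = (β - γ) / (ε * (1 - ε))) :
    ((X 0 + C y₁ - (X 1 + C v₁) + C α) * (X 0 + C y₁ - C ε * (X 1 + C v₁) + C β) *
        (X 0 + C y₁ - C (ε ^ 2) * (X 1 + C v₁) + C γ) : MvPolynomial (Fin 2) ℂ) =
      X 0 ^ 3 - X 1 ^ 3 := by
  have hε0 : ε ≠ 0 := by rintro rfl; simp at hε3
  have h1ε : (1 : ℂ) - ε ≠ 0 := sub_ne_zero.mpr (Ne.symm hε)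
  have hs : ε ^ 2 + ε + 1 = 0 := by
    have h3 : (ε - 1) * (ε ^ 2 + ε + 1) = 0 := by linear_combination hε3
    rcases mul_eq_zero.mp h3 with h' | h'
    · exact absurd (sub_eq_zero.mp h') hε
    · exact h'
  have h1 : y₁ - v₁ + α = 0 := by
    rw [hy₁, hv₁]
    field_simp
    linear_combination (1 + 2 * ε) * h +
      (-β + (1 - 2 * ε) * γ - α) * hs
  have h2 : y₁ - ε * v₁ + β = 0 := by
    rw [hy₁, hv₁]; field_simp; ring
  have h3 : y₁ - ε ^ 2 * v₁ + γ = 0 := by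
    rw [hy₁, hv₁]; field_simp; ring
  have e1 : (C y₁ - C v₁ + C α : MvPolynomial (Fin 2) ℂ) = 0 := by
    rw [← C_sub, ← C_add, h1, C_0]
  have e2 : (C y₁ - C ε * C v₁ + C β : MvPolynomial (Fin 2) ℂ) = 0 := by
    rw [← C_mul, ← C_sub, ← C_add, h2, C_0]
  have e3 : (C y₁ - C (ε ^ 2) * C v₁ + C γ : MvPolynomial (Fin 2) ℂ) = 0 := by
    rw [← C_mul, ← C_sub, ← C_add, h3, C_0]
  have f1 : (X 0 + C y₁ - (X 1 + C v₁) + C α : MvPolynomial (Fin 2) ℂ) = X 0 - X 1 := by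
    linear_combination e1
  have f2 : (X 0 + C y₁ - C ε * (X 1 + C v₁) + C β : MvPolynomial (Fin 2) ℂ)
      = X 0 - C ε * X 1 := by linear_combination e2
  have f3 : (X 0 + C y₁ - C (ε ^ 2) * (X 1 + C v₁) + C γ : MvPolynomial (Fin 2) ℂ)
      = X 0 - C (ε ^ 2) * X 1 := by linear_combination e3
  rw [f1, f2, f3]
  have hsC : (C ε : MvPolynomial (Fin 2) ℂ) ^ 2 + C ε + 1 = 0 := by
    have : ((C (ε ^ 2 + ε + 1) : MvPolynomial (Fin 2) ℂ)) = 0 := by rw [hs, C_0]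
    rw [map_add, map_add, C_pow, C_1] at this
    exact this
  have h3C : (C ε : MvPolynomial (Fin 2) ℂ) ^ 3 = 1 := by
    rw [← C_pow, hε3, C_1]
  have hC2 : (C (ε ^ 2) : MvPolynomial (Fin 2) ℂ) = C ε ^ 2 := by rw [C_pow]
  rw [hC2]
  linear_combination (X 0 * X 1 ^ 2 - X 0 ^ 2 * X 1) * hsC +
    (X 0 * X 1 ^ 2 - X 1 ^ 3) * h3C
end
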